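/- For each k ≥ 3, the group P(k) = ⟨a,b,c | a³ = b³ = c^{3^{k−2}} = [a,c] = [b,c] = 1, [a,b] = c^{3^{k−3}}⟩ has order 3^k, has center containing ⟨c⟩ of order 3^{k−2}, and has rank 2 (i.e., contains no subgroup isomorphic to Z/3 × Z/3 × Z/3). -/

import Mathlib

open FreeGroup

/-- The relators of
`P(k) = ⟨a,b,c | a³ = b³ = c^(3^(k-2)) = [a,c] = [b,c] = 1, [a,b] = c^(3^(k-3))⟩`,
with generators `a = of 0`, `b = of 1`, `c = of 2`. -/
def Prels (k : ℕ) : Set (FreeGroup (Fin 3)) :=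
  let a : FreeGroup (Fin 3) := FreeGroup.of 0
  let b : FreeGroup (Fin 3) := FreeGroup.of 1
  let c : FreeGroup (Fin 3) := FreeGroup.of 2
  {a ^ 3, b ^ 3, c ^ 3 ^ (k - 2), a⁻¹ * c⁻¹ * a * c, b⁻¹ * c⁻¹ * b * c,
   (a⁻¹ * b⁻¹ * a * b) * (c ^ 3 ^ (k - 3))⁻¹}

/-- The group `P(k)`. -/
def P (k : ℕ) : Type := PresentedGroup (Prels k)

instance (k : ℕ) : Group (P k) := by unfold P; infer_instance

/-!
The relations make `c` central and give `a * b = c ^ 3 ^ (k - 3) * b * a`, so every element of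
`P k` can be written `c ^ l * b ^ j * a ^ i` with `i, j < 3` and `l < 3 ^ (k - 2)`; hence
`|P k| ≤ 3 ^ k`. Conversely `a, b, c` map onto generators of an explicit group of order `3 ^ k`
on `ZMod 3 × ZMod 3 × ZMod (3 ^ (k - 2))`, so this map is an isomorphism. In that model
`g ^ 3 = 1` only when the last coordinate is killed by `3`, so there are just 27 such elements.
A subgroup `≅ (ZMod 3)³` would consist of exactly these elements, hence contain the
non-commuting `a` and `b`.
-/

lemma mul_eq_mul_mul_commutator {G : Type*} [Group G] (x y : G) :
    x * y = y * x * (x⁻¹ * y⁻¹ * x * y) := by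
  group

lemma inv_mul_inv_mul_mul_eq_one_iff_commute {G : Type*} [Group G] {x y : G} :
    x⁻¹ * y⁻¹ * x * y = 1 ↔ Commute x y := by
  refine ⟨fun h => ?_, fun h => ?_⟩
  · rw [Commute, SemiconjBy, mul_eq_mul_mul_commutator, h, mul_one]
  · rw [mul_assoc, h.eq]
    group

theorem isEmpty_subgroup_mulEquiv_of_not_commute {G E : Type*} [Group G] [Finite G] [CommGroup E]
    {n : ℕ} (hE : ∀ u : E, u ^ n = 1) (hcard : Nat.card {g : G // g ^ n = 1} ≤ Nat.card E)
    {x y : G} (hx : x ^ n = 1) (hy : y ^ n = 1) (hxy : ¬Commute x y) (H : Subgroup G) :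
    IsEmpty (H ≃* E) := by
  refine ⟨fun e => hxy ?_⟩
  have hH : (H : Set G) ⊆ {g | g ^ n = 1} := fun h hh => by
    have : e (⟨h, hh⟩ ^ n) = e 1 := by rw [map_pow, hE, _root_.map_one]
    simpa using congrArg Subtype.val (e.injective this)
  have hHeq : (H : Set G) = {g | g ^ n = 1} := by
    refine Set.eq_of_subset_of_ncard_le hH ?_ (Set.toFinite _)
    rwa [← Nat.card_coe_set_eq, ← Nat.card_coe_set_eq, SetLike.coe_sort_coe,
      Nat.card_congr e.toEquiv]
  have hxH : x ∈ H := by rw [← SetLike.mem_coe, hHeq]; exact hx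
  have hyH : y ∈ H := by rw [← SetLike.mem_coe, hHeq]; exact hy
  have : (⟨x, hxH⟩ : H) * ⟨y, hyH⟩ = ⟨y, hyH⟩ * ⟨x, hxH⟩ :=
    e.injective (by rw [_root_.map_mul, _root_.map_mul, mul_comm])
  exact congrArg Subtype.val this

namespace P

variable {k : ℕ}

def a : P k := PresentedGroup.of 0
def b : P k := PresentedGroup.of 1
def c : P k := PresentedGroup.of 2

lemma a_pow_three : (a : P k) ^ 3 = 1 :=
  PresentedGroup.one_of_mem (x := .of 0 ^ 3) (by simp [Prels])

lemma b_pow_three : (b : P k) ^ 3 = 1 :=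
  PresentedGroup.one_of_mem (x := .of 1 ^ 3) (by simp [Prels])

lemma c_pow_three_pow : (c : P k) ^ 3 ^ (k - 2) = 1 :=
  PresentedGroup.one_of_mem (x := .of 2 ^ 3 ^ (k - 2)) (by simp [Prels])

lemma commute_a_c : Commute (a : P k) c :=
  inv_mul_inv_mul_mul_eq_one_iff_commute.mp <| PresentedGroup.one_of_mem
    (x := (.of 0)⁻¹ * (.of 2)⁻¹ * .of 0 * .of 2) (by simp [Prels])

lemma commute_b_c : Commute (b : P k) c :=
  inv_mul_inv_mul_mul_eq_one_iff_commute.mp <| PresentedGroup.one_of_mem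
    (x := (.of 1)⁻¹ * (.of 2)⁻¹ * .of 1 * .of 2) (by simp [Prels])

lemma closure_a_b_c : Subgroup.closure {a, b, c} = (⊤ : Subgroup (P k)) := by
  refine eq_top_iff.mpr fun g _ =>
    PresentedGroup.generated_by (Prels k) (Subgroup.closure {a, b, c}) (fun j => ?_) g
  apply Subgroup.subset_closure
  fin_cases j
  exacts [.inl rfl, .inr (.inl rfl), .inr (.inr rfl)]

lemma c_mem_center : (c : P k) ∈ Subgroup.center (P k) := by
  have h : Subgroup.centralizer {c} = (⊤ : Subgroup (P k)) := by
    rw [eq_top_iff, ← closure_a_b_c, Subgroup.closure_le]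
    simp [Set.insert_subset_iff, Subgroup.mem_centralizer_singleton_iff, commute_a_c.eq,
      commute_b_c.eq]
  exact Subgroup.centralizer_eq_top_iff_subset.mp h rfl

lemma commute_c (g : P k) : Commute g c :=
  Subgroup.mem_center_iff.mp c_mem_center g

lemma a_mul_b : (a : P k) * b = c ^ 3 ^ (k - 3) * b * a := by
  have h : (a : P k)⁻¹ * b⁻¹ * a * b = c ^ 3 ^ (k - 3) :=
    eq_of_mul_inv_eq_one <| PresentedGroup.one_of_mem
      (x := (.of 0)⁻¹ * (.of 1)⁻¹ * .of 0 * .of 1 * (.of 2 ^ 3 ^ (k - 3))⁻¹)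
      (by simp [Prels])
  rw [mul_eq_mul_mul_commutator, h, ((commute_c _).pow_right _).eq, mul_assoc]

lemma a_mul_b_pow (j : ℕ) : (a : P k) * b ^ j = c ^ (3 ^ (k - 3) * j) * b ^ j * a := by
  induction j with
  | zero => simp
  | succ j ih =>
    calc a * b ^ (j + 1) = c ^ (3 ^ (k - 3) * j) * b ^ j * (a * b) := by
          rw [pow_succ, ← mul_assoc, ih]; group
      _ = c ^ (3 ^ (k - 3) * j) * (b ^ j * c ^ 3 ^ (k - 3)) * b * a := by
          rw [a_mul_b]; group
      _ = c ^ (3 ^ (k - 3) * (j + 1)) * b ^ (j + 1) * a := by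
        rw [((commute_c _).pow_right _).eq]; group

lemma exists_c_pow_mul_b_pow_mul_a_pow_eq (g : P k) :
    ∃ l j i : ℕ, c ^ l * b ^ j * a ^ i = g := by
  have hfin : ∀ x ∈ ({a, b, c} : Set (P k)), IsOfFinOrder x := by
    rintro x (rfl | rfl | rfl)
    exacts [isOfFinOrder_iff_pow_eq_one.mpr ⟨3, by norm_num, a_pow_three⟩,
      isOfFinOrder_iff_pow_eq_one.mpr ⟨3, by norm_num, b_pow_three⟩,
      isOfFinOrder_iff_pow_eq_one.mpr ⟨3 ^ (k - 2), by positivity, c_pow_three_pow⟩]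
  have hg : g ∈ Submonoid.closure {a, b, c} := by
    rw [← Subgroup.closure_toSubmonoid_of_isOfFinOrder hfin, closure_a_b_c]
    trivial
  induction hg using Submonoid.closure_induction_left with
  | one => exact ⟨0, 0, 0, by simp⟩
  | mul_left x hx y _ ih =>
    obtain ⟨l, j, i, rfl⟩ := ih
    rcases hx with rfl | rfl | rfl
    · refine ⟨l + 3 ^ (k - 3) * j, j, i + 1, ?_⟩
      calc c ^ (l + 3 ^ (k - 3) * j) * b ^ j * a ^ (i + 1)
          = c ^ l * (c ^ (3 ^ (k - 3) * j) * b ^ j * a) * a ^ i := by group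
        _ = a * (c ^ l * b ^ j * a ^ i) := by
          rw [← a_mul_b_pow, ← mul_assoc, ← mul_assoc, ← ((commute_c _).pow_right _).eq]
          group
    · refine ⟨l, j + 1, i, ?_⟩
      calc c ^ l * b ^ (j + 1) * a ^ i = c ^ l * b * b ^ j * a ^ i := by group
        _ = b * (c ^ l * b ^ j * a ^ i) := by rw [← ((commute_c b).pow_right l).eq]; group
    · exact ⟨l + 1, j, i, by group⟩

def lift {G : Type*} [Group G] {x y z : G} (hx : x ^ 3 = 1) (hy : y ^ 3 = 1)
    (hz : z ^ 3 ^ (k - 2) = 1) (hxz : Commute x z) (hyz : Commute y z)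
    (hxy : x⁻¹ * y⁻¹ * x * y = z ^ 3 ^ (k - 3)) : P k →* G :=
  PresentedGroup.toGroup (f := ![x, y, z]) <| by
    rintro r (rfl | rfl | rfl | rfl | rfl | rfl) <;>
      simp only [_root_.map_mul, _root_.map_inv, map_pow, FreeGroup.lift_apply_of,
        Matrix.cons_val_zero, Matrix.cons_val_one, Matrix.cons_val_two, Matrix.head_cons,
        Matrix.tail_cons]
    exacts [hx, hy, hz, inv_mul_inv_mul_mul_eq_one_iff_commute.mpr hxz,
      inv_mul_inv_mul_mul_eq_one_iff_commute.mpr hyz, mul_inv_eq_one.mpr hxy]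

section lift

variable {G : Type*} [Group G] {x y z : G} (hx : x ^ 3 = 1) (hy : y ^ 3 = 1)
    (hz : z ^ 3 ^ (k - 2) = 1) (hxz : Commute x z) (hyz : Commute y z)
    (hxy : x⁻¹ * y⁻¹ * x * y = z ^ 3 ^ (k - 3))

@[simp] lemma lift_a : lift hx hy hz hxz hyz hxy a = x := PresentedGroup.toGroup.of _
@[simp] lemma lift_b : lift hx hy hz hxz hyz hxy b = y := PresentedGroup.toGroup.of _
@[simp] lemma lift_c : lift hx hy hz hxz hyz hxy c = z := PresentedGroup.toGroup.of _

end lift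

end P

def mulThreePow (m : ℕ) : ZMod 3 →+ ZMod (3 ^ (m + 1)) :=
  ZMod.lift 3 ⟨zmultiplesHom _ (3 ^ m), by
    simp only [zmultiplesHom_apply, Nat.cast_ofNat, zsmul_eq_mul, Int.cast_ofNat, ← pow_succ']
    exact_mod_cast ZMod.natCast_self (3 ^ (m + 1))⟩

lemma mulThreePow_one (m : ℕ) : mulThreePow m 1 = 3 ^ m := by
  change ZMod.lift 3 _ ((1 : ℤ) : ZMod 3) = _
  rw [ZMod.lift_coe]
  simp

/-- The group law is that of the Heisenberg group mod 3, with its central coordinate embedded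
in `ZMod (3 ^ (m + 1))` by `mulThreePow m`. -/
@[ext]
structure Model (m : ℕ) where
  x : ZMod 3
  y : ZMod 3
  z : ZMod (3 ^ (m + 1))

namespace Model

variable {m : ℕ}

instance : Mul (Model m) :=
  ⟨fun g h => ⟨g.x + h.x, g.y + h.y, g.z + h.z + mulThreePow m (g.x * h.y)⟩⟩

instance : One (Model m) := ⟨⟨0, 0, 0⟩⟩

instance : Inv (Model m) := ⟨fun g => ⟨-g.x, -g.y, -g.z + mulThreePow m (g.x * g.y)⟩⟩

lemma mul_def (g h : Model m) :
    g * h = ⟨g.x + h.x, g.y + h.y, g.z + h.z + mulThreePow m (g.x * h.y)⟩ := rfl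

lemma one_def : (1 : Model m) = ⟨0, 0, 0⟩ := rfl

lemma inv_def (g : Model m) : g⁻¹ = ⟨-g.x, -g.y, -g.z + mulThreePow m (g.x * g.y)⟩ := rfl

instance : Group (Model m) := Group.ofLeftAxioms
  (fun g h l => by ext <;> simp only [mul_def, mul_add, add_mul, map_add] <;> abel)
  (fun g => by ext <;> simp [mul_def, one_def])
  (fun g => by ext <;> simp [mul_def, inv_def, one_def])

def equivProd : Model m ≃ ZMod 3 × ZMod 3 × ZMod (3 ^ (m + 1)) where
  toFun g := (g.x, g.y, g.z)
  invFun p := ⟨p.1, p.2.1, p.2.2⟩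

lemma card : Nat.card (Model m) = 3 ^ (m + 3) := by
  simp only [Nat.card_congr equivProd, Nat.card_prod, Nat.card_zmod]; ring

instance : Finite (Model m) := .of_equiv _ equivProd.symm

def a : Model m := ⟨1, 0, 0⟩
def b : Model m := ⟨0, 1, 0⟩
def c : Model m := ⟨0, 0, 1⟩

lemma a_pow (n : ℕ) : (a : Model m) ^ n = ⟨n, 0, 0⟩ := by
  induction n with
  | zero => simp [one_def]
  | succ n ih => rw [pow_succ, ih]; ext <;> simp [mul_def, a]

lemma b_pow (n : ℕ) : (b : Model m) ^ n = ⟨0, n, 0⟩ := by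
  induction n with
  | zero => simp [one_def]
  | succ n ih => rw [pow_succ, ih]; ext <;> simp [mul_def, b]

lemma c_pow (n : ℕ) : (c : Model m) ^ n = ⟨0, 0, n⟩ := by
  induction n with
  | zero => simp [one_def]
  | succ n ih => rw [pow_succ, ih]; ext <;> simp [mul_def, c]

lemma pow_three (g : Model m) : g ^ 3 = ⟨0, 0, 3 * g.z⟩ := by
  have h3 : (3 : ZMod 3) = 0 := rfl
  have hcocycle : g.x * g.y + (g.x + g.x) * g.y = 0 := by linear_combination g.x * g.y * h3
  have hz : mulThreePow m (g.x * g.y) + mulThreePow m ((g.x + g.x) * g.y) = 0 := by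
    rw [← map_add, hcocycle, map_zero]
  ext <;> simp only [pow_succ, pow_zero, one_mul, mul_def]
  · linear_combination g.x * h3
  · linear_combination g.y * h3
  · linear_combination hz

lemma c_pow_eq_one_iff (n : ℕ) : (c : Model m) ^ n = 1 ↔ 3 ^ (m + 1) ∣ n := by
  simp [c_pow, one_def, Model.ext_iff, ZMod.natCast_eq_zero_iff]

lemma orderOf_c : orderOf (c : Model m) = 3 ^ (m + 1) :=
  Nat.dvd_antisymm (orderOf_dvd_of_pow_eq_one ((c_pow_eq_one_iff _).mpr dvd_rfl))
    ((c_pow_eq_one_iff _).mp (pow_orderOf_eq_one _))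

lemma card_pow_three_eq_one_le : Nat.card {g : Model m // g ^ 3 = 1} ≤ 27 := by
  let Z := {z : ZMod (3 ^ (m + 1)) // 3 • z = 0}
  let f : {g : Model m // g ^ 3 = 1} → ZMod 3 × ZMod 3 × Z := fun g =>
    (g.1.x, g.1.y, ⟨g.1.z, by simpa [pow_three, one_def, Model.ext_iff] using g.2⟩)
  have hf : Function.Injective f := fun g h hgh => by
    simp only [f, Prod.mk.injEq] at hgh
    exact Subtype.ext (Model.ext hgh.1 hgh.2.1 (congrArg Subtype.val hgh.2.2))
  have hZ : Nat.card Z ≤ 3 := by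
    classical
    rw [Nat.card_eq_fintype_card, Fintype.card_subtype]
    exact IsAddCyclic.card_nsmul_eq_zero_le (by norm_num)
  calc Nat.card {g : Model m // g ^ 3 = 1} ≤ Nat.card (ZMod 3 × ZMod 3 × Z) :=
        Nat.card_le_card_of_injective f hf
    _ = 9 * Nat.card Z := by
        simp only [Nat.card_prod, Nat.card_zmod]; ring
    _ ≤ 27 := by omega

lemma a_pow_three : (a : Model m) ^ 3 = 1 := by
  rw [a_pow]; rfl

lemma b_pow_three : (b : Model m) ^ 3 = 1 := by
  rw [b_pow]; rfl

lemma c_pow_three_pow : (c : Model m) ^ 3 ^ (m + 1) = 1 :=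
  (c_pow_eq_one_iff _).mpr dvd_rfl

lemma commute_a_c : Commute (a : Model m) c := by
  ext <;> simp [mul_def, a, c, add_comm]

lemma commute_b_c : Commute (b : Model m) c := by
  ext <;> simp [mul_def, b, c, add_comm]

lemma commutator_a_b : (a : Model m)⁻¹ * b⁻¹ * a * b = c ^ 3 ^ m := by
  ext <;> simp [mul_def, inv_def, a, b, c_pow, mulThreePow_one]

end Model

namespace P

variable {m : ℕ}

def toModel : P (m + 3) →* Model m :=
  lift Model.a_pow_three Model.b_pow_three Model.c_pow_three_pow Model.commute_a_c
    Model.commute_b_c Model.commutator_a_b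

def ofModel (g : Model m) : P (m + 3) := c ^ g.z.val * b ^ g.y.val * a ^ g.x.val

lemma toModel_ofModel (g : Model m) : toModel (ofModel g) = g := by
  simp [ofModel, toModel, Model.a_pow, Model.b_pow, Model.c_pow, Model.mul_def]

lemma ofModel_surjective : Function.Surjective (ofModel (m := m)) := by
  intro g
  obtain ⟨l, j, i, rfl⟩ := exists_c_pow_mul_b_pow_mul_a_pow_eq g
  have hc : (c : P (m + 3)) ^ 3 ^ (m + 1) = 1 := c_pow_three_pow
  refine ⟨⟨i, j, l⟩, ?_⟩
  rw [ofModel, ZMod.val_natCast, ZMod.val_natCast, ZMod.val_natCast,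
    ← pow_eq_pow_mod i a_pow_three, ← pow_eq_pow_mod j b_pow_three, ← pow_eq_pow_mod l hc]

lemma toModel_bijective : Function.Bijective (toModel (m := m)) :=
  have h : Function.LeftInverse toModel ofModel := toModel_ofModel
  ⟨(h.rightInverse_of_surjective ofModel_surjective).injective, h.surjective⟩

noncomputable def equivModel : P (m + 3) ≃* Model m := .ofBijective toModel toModel_bijective

instance : Finite (P (m + 3)) := .of_equiv _ equivModel.symm.toEquiv

lemma card_eq : Nat.card (P (m + 3)) = 3 ^ (m + 3) :=
  (Nat.card_congr equivModel.toEquiv).trans Model.card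

lemma orderOf_c : orderOf (c : P (m + 3)) = 3 ^ (m + 1) := by
  rw [← orderOf_injective toModel toModel_bijective.injective, toModel, lift_c, Model.orderOf_c]

lemma card_pow_three_eq_one_le : Nat.card {g : P (m + 3) // g ^ 3 = 1} ≤ 27 :=
  (Nat.card_congr (equivModel.toEquiv.subtypeEquiv fun g => by simp [← map_pow])).trans_le
    Model.card_pow_three_eq_one_le

lemma not_commute_a_b : ¬Commute (a : P (m + 3)) b := by
  intro h
  have hc : (c : P (m + 3)) ^ 3 ^ m = 1 := by
    simpa [h.eq] using (a_mul_b (k := m + 3)).symm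
  refine pow_ne_one_of_lt_orderOf (by positivity) ?_ hc
  rw [orderOf_c]
  exact Nat.pow_lt_pow_right (by norm_num) m.lt_succ_self

end P

/-- For `k ≥ 3`, `P(k)` has order `3^k`, its center contains the subgroup generated by `c`,
which has order `3^(k-2)`, and it has rank `2`: it contains no subgroup isomorphic to
`ℤ/3 × ℤ/3 × ℤ/3`. -/
theorem Pk_properties (k : ℕ) (hk : 3 ≤ k) :
    let c : P k := PresentedGroup.of (rels := Prels k) 2
    Nat.card (P k) = 3 ^ k ∧
    Subgroup.zpowers c ≤ Subgroup.center (P k) ∧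
    Nat.card (Subgroup.zpowers c) = 3 ^ (k - 2) ∧
    ¬ ∃ H : Subgroup (P k),
        Nonempty (H ≃* Multiplicative (ZMod 3 × ZMod 3 × ZMod 3)) := by
  obtain ⟨m, rfl⟩ : ∃ m, k = m + 3 := ⟨k - 3, by omega⟩
  refine ⟨P.card_eq, Subgroup.zpowers_le.mpr P.c_mem_center, ?_, ?_⟩
  · exact (Nat.card_zpowers _).trans P.orderOf_c
  · rintro ⟨H, ⟨e⟩⟩
    have hE : ∀ u : Multiplicative (ZMod 3 × ZMod 3 × ZMod 3), u ^ 3 = 1 := by decide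
    refine (isEmpty_subgroup_mulEquiv_of_not_commute hE ?_ P.a_pow_three P.b_pow_three
      P.not_commute_a_b H).false e
    simpa using P.card_pow_three_eq_one_le
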